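/- Let p ≥ 2, κ ∈ [0,1] and γ ∈ [1/(p−1), 1], and let E(ξ) = (|ξ| + κ)^{γp − γ − 1} ξ. Then there is a constant C = C(p, γ) > 0 such that for all ξ, ζ ∈ ℝⁿ, |E(ξ) − E(ζ)|^{1/γ} ≤ C (|ξ| + |ζ| + κ)^{p−2} |ξ − ζ|. -/

import Mathlib

/-!
Write `α = γp - γ - 1 ≥ 0`, so that `E(ξ) = (|ξ| + κ)^α ξ`. Splitting
`E(ξ) - E(ζ) = a^α (ξ - ζ) + (a^α - b^α) ζ` with `a = |ξ| + κ ≥ b = |ζ| + κ` and bounding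
`a^α - b^α` by the mean value theorem gives the Lipschitz-type bound
`|E(ξ) - E(ζ)| ≤ (1 + α) M^α |ξ - ζ|`, where `M = |ξ| + |ζ| + κ`. Raising it to the power
`1/γ ≥ 1` and using `|ξ - ζ| ≤ M` to trade `|ξ - ζ|^(1/γ - 1)` for `M^(1/γ - 1)` yields the
exponent `(α + 1)/γ - 1 = p - 2`.
-/

open Real Set

/-- The factor `t ≤ b` absorbs the singular derivative `α c^(α-1)` of `x ^ α` near `0`. -/
lemma rpow_sub_rpow_mul_le {α a b t : ℝ} (hα : 0 ≤ α) (ht : 0 ≤ t) (htb : t ≤ b)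
    (hba : b ≤ a) :
    (a ^ α - b ^ α) * t ≤ α * (a - b) * a ^ α := by
  obtain rfl | hlt := hba.eq_or_lt
  · simp
  have hb : 0 ≤ b := ht.trans htb
  have hderiv : ∀ x ∈ Ioo b a, HasDerivAt (fun x : ℝ => x ^ α) (α * x ^ (α - 1)) x :=
    fun x hx => hasDerivAt_rpow_const (Or.inl (hb.trans_lt hx.1).ne')
  obtain ⟨c, ⟨hbc, hca⟩, hslope⟩ := exists_hasDerivAt_eq_slope (fun x : ℝ => x ^ α)
    (fun x => α * x ^ (α - 1)) hlt (continuous_rpow_const hα).continuousOn hderiv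
  have hc : 0 < c := hb.trans_lt hbc
  have hdiff : a ^ α - b ^ α = α * c ^ (α - 1) * (a - b) := by
    rw [hslope, div_mul_cancel₀ _ (sub_ne_zero.mpr hlt.ne')]
  have hpow : c ^ (α - 1) * t ≤ a ^ α :=
    calc c ^ (α - 1) * t ≤ c ^ (α - 1) * c := by gcongr; linarith
      _ = c ^ α := by rw [← rpow_add_one hc.ne', sub_add_cancel]
      _ ≤ a ^ α := rpow_le_rpow hc.le hca.le hα
  calc (a ^ α - b ^ α) * t = α * (a - b) * (c ^ (α - 1) * t) := by rw [hdiff]; ring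
    _ ≤ α * (a - b) * a ^ α := by gcongr

section NormedSpace

variable {F : Type*} [NormedAddCommGroup F] [NormedSpace ℝ F]

lemma norm_rpow_smul_sub_rpow_smul_le_of_norm_le {κ α : ℝ} (hκ : 0 ≤ κ) (hα : 0 ≤ α)
    {ξ ζ : F} (hζξ : ‖ζ‖ ≤ ‖ξ‖) :
    ‖(‖ξ‖ + κ) ^ α • ξ - (‖ζ‖ + κ) ^ α • ζ‖ ≤ (1 + α) * (‖ξ‖ + κ) ^ α * ‖ξ - ζ‖ := by
  set a := ‖ξ‖ + κ
  set b := ‖ζ‖ + κ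
  have hb : 0 ≤ b := by positivity
  have hba : b ≤ a := by linarith
  have hsplit : a ^ α • ξ - b ^ α • ζ = a ^ α • (ξ - ζ) + (a ^ α - b ^ α) • ζ := by module
  have hfirst : ‖a ^ α • (ξ - ζ)‖ = a ^ α * ‖ξ - ζ‖ := by
    rw [norm_smul, norm_of_nonneg (by positivity)]
  have hsecond : ‖(a ^ α - b ^ α) • ζ‖ ≤ α * a ^ α * ‖ξ - ζ‖ := by
    rw [norm_smul, norm_of_nonneg (sub_nonneg.2 (rpow_le_rpow hb hba hα))]
    calc (a ^ α - b ^ α) * ‖ζ‖ ≤ α * (a - b) * a ^ α :=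
          rpow_sub_rpow_mul_le hα (norm_nonneg ζ) (by linarith) hba
      _ = α * a ^ α * (‖ξ‖ - ‖ζ‖) := by ring
      _ ≤ α * a ^ α * ‖ξ - ζ‖ := by gcongr; exact norm_sub_norm_le ξ ζ
  calc ‖a ^ α • ξ - b ^ α • ζ‖
      ≤ ‖a ^ α • (ξ - ζ)‖ + ‖(a ^ α - b ^ α) • ζ‖ := hsplit ▸ norm_add_le _ _
    _ ≤ a ^ α * ‖ξ - ζ‖ + α * a ^ α * ‖ξ - ζ‖ := by rw [hfirst]; gcongr
    _ = (1 + α) * a ^ α * ‖ξ - ζ‖ := by ring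

lemma norm_rpow_smul_sub_rpow_smul_le {κ α : ℝ} (hκ : 0 ≤ κ) (hα : 0 ≤ α) (ξ ζ : F) :
    ‖(‖ξ‖ + κ) ^ α • ξ - (‖ζ‖ + κ) ^ α • ζ‖ ≤
      (1 + α) * (‖ξ‖ + ‖ζ‖ + κ) ^ α * ‖ξ - ζ‖ := by
  wlog hζξ : ‖ζ‖ ≤ ‖ξ‖ generalizing ξ ζ
  · rw [norm_sub_rev, norm_sub_rev ξ, add_comm ‖ξ‖ ‖ζ‖]
    exact this ζ ξ (le_of_not_ge hζξ)
  calc _ ≤ (1 + α) * (‖ξ‖ + κ) ^ α * ‖ξ - ζ‖ :=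
        norm_rpow_smul_sub_rpow_smul_le_of_norm_le hκ hα hζξ
    _ ≤ (1 + α) * (‖ξ‖ + ‖ζ‖ + κ) ^ α * ‖ξ - ζ‖ := by
        gcongr
        linarith [norm_nonneg ζ]

end NormedSpace

lemma mul_rpow_mul_rpow_one_div_le {L M d α γ : ℝ} (hL : 0 ≤ L) (hd : 0 ≤ d) (hdM : d ≤ M)
    (hγ : 0 < γ) (hγ1 : γ ≤ 1) :
    (L * M ^ α * d) ^ (1 / γ) ≤ L ^ (1 / γ) * M ^ ((α + 1) / γ - 1) * d := by
  obtain rfl | hd := hd.eq_or_lt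
  · rw [mul_zero, mul_zero, zero_rpow (one_div_pos.2 hγ).ne']
  have hM : 0 < M := hd.trans_le hdM
  have hexp : (α + 1) / γ - 1 = α * (1 / γ) + (1 / γ - 1) := by ring
  have hγ' : 0 ≤ 1 / γ - 1 := by rw [sub_nonneg, le_div_iff₀ hγ, one_mul]; exact hγ1
  calc (L * M ^ α * d) ^ (1 / γ)
      = L ^ (1 / γ) * M ^ (α * (1 / γ)) * (d ^ (1 / γ - 1) * d) := by
        rw [mul_rpow (by positivity) hd.le, mul_rpow hL (by positivity), ← rpow_mul hM.le,
          ← rpow_add_one hd.ne', sub_add_cancel]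
    _ ≤ L ^ (1 / γ) * M ^ (α * (1 / γ)) * (M ^ (1 / γ - 1) * d) := by
        gcongr
    _ = L ^ (1 / γ) * M ^ ((α + 1) / γ - 1) * d := by
        rw [hexp, rpow_add hM]; ring

/-- For `p ≥ 2`, `κ ∈ [0,1]`, `γ ∈ [1/(p-1), 1]` and
`E(ξ) = (|ξ| + κ)^(γp - γ - 1) ξ`, there is `C = C(p,γ) > 0` such that
`|E(ξ) - E(ζ)|^(1/γ) ≤ C (|ξ| + |ζ| + κ)^(p-2) |ξ - ζ|` for all `ξ, ζ ∈ ℝⁿ`. -/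
theorem statement3 (p κ γ : ℝ) (hp : 2 ≤ p) (hκ : κ ∈ Set.Icc (0:ℝ) 1)
    (hγ : γ ∈ Set.Icc (1/(p-1)) 1)
    (E : ∀ n : ℕ, EuclideanSpace ℝ (Fin n) → EuclideanSpace ℝ (Fin n))
    (hE : ∀ (n : ℕ) (ξ : EuclideanSpace ℝ (Fin n)),
      E n ξ = ((‖ξ‖ + κ) ^ (γ * p - γ - 1)) • ξ) :
    ∃ C : ℝ, 0 < C ∧ ∀ (n : ℕ) (ξ ζ : EuclideanSpace ℝ (Fin n)),
      ‖E n ξ - E n ζ‖ ^ (1/γ) ≤ C * (‖ξ‖ + ‖ζ‖ + κ) ^ (p - 2) * ‖ξ - ζ‖ := by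
  obtain ⟨hκ0, -⟩ := hκ
  obtain ⟨hγp, hγ1⟩ := hγ
  set α := γ * p - γ - 1
  have hp1 : 0 < p - 1 := by linarith
  have hγ0 : 0 < γ := (one_div_pos.2 hp1).trans_le hγp
  have hα : 0 ≤ α := by
    have := (div_le_iff₀ hp1).1 hγp
    linarith
  have hexp : (α + 1) / γ - 1 = p - 2 := by field_simp; ring
  refine ⟨(1 + α) ^ (1 / γ), by positivity, fun n ξ ζ => ?_⟩
  have hlip := norm_rpow_smul_sub_rpow_smul_le hκ0 hα ξ ζ
  have hdM : ‖ξ - ζ‖ ≤ ‖ξ‖ + ‖ζ‖ + κ := by linarith [norm_sub_le ξ ζ]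
  rw [hE, hE, ← hexp]
  calc ‖(‖ξ‖ + κ) ^ α • ξ - (‖ζ‖ + κ) ^ α • ζ‖ ^ (1 / γ)
      ≤ ((1 + α) * (‖ξ‖ + ‖ζ‖ + κ) ^ α * ‖ξ - ζ‖) ^ (1 / γ) := by gcongr
    _ ≤ _ := mul_rpow_mul_rpow_one_div_le (by positivity) (norm_nonneg _) hdM hγ0 hγ1
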